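/- Derivative estimate along the regularized modified dynamics: Let s ∈ (0,1], a > 0, ε ∈ (0,1], let G_{s,ε} be an ε-regularization of G_s and L_{a,ε} an ε-regularization of L_a(q) = q^{−2−a}. Fix i and define Φ(Y) = Σ_{j≠i} L_{a,ε}(|y_{ij}|) and Ψ(Y) = Σ_{j≠i} Σ_{k≠i,j} |a_k| |L_{a,ε}'(|y_{ij}|)| (|G_{s,ε}'(|y_{ik}|)| + |G_{s,ε}'(|y_{ij} − y_{ik}|)|) for Y = (y_{ij})_{j≠i} ∈ ℝ^{2(N−1)}. Then for every solution t ↦ Y(t) = (y_{ij}(t))_{j≠i} of the modified system with kernel G_{s,ε}, one has |d/dt Φ(Y(t))| ≤ Ψ(Y(t)) for all t; in particular, the self-interaction terms involving (a_i + a_j) ∇^⊥G_{s,ε}(|y_{ij}|) give no contribution to d/dt Φ. -/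

import Mathlib

open Filter MeasureTheory

noncomputable section

/-- The plane `ℝ²`. -/
abbrev Plane : Type := EuclideanSpace ℝ (Fin 2)

/-- Counterclockwise rotation by `π/2`: `(v₁, v₂)^⊥ = (−v₂, v₁)`. -/
def perp (v : Plane) : Plane := WithLp.toLp 2 ![-v 1, v 0]

/-- `∇^⊥_y K(|y|) = K'(|y|) y^⊥ / |y|` for a radial kernel profile `K`. -/
def gradPerp (K : ℝ → ℝ) (y : Plane) : Plane := (deriv K ‖y‖ / ‖y‖) • perp y

/-- A solution of the point-vortex system with intensities `a`, kernel profile `G`,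
on the time interval `[0, T)`, with no collapse. -/
def IsVortexSolution (N : ℕ) (a : Fin N → ℝ) (G : ℝ → ℝ) (T : ℝ)
    (x : Fin N → ℝ → Plane) : Prop :=
  (∀ t ∈ Set.Ico (0 : ℝ) T, ∀ i j : Fin N, i ≠ j → x i t ≠ x j t) ∧
  ∀ i : Fin N, ∀ t ∈ Set.Ico (0 : ℝ) T,
    HasDerivWithinAt (x i)
      (∑ j ∈ Finset.univ.erase i, a j • gradPerp G (x i t - x j t))
      (Set.Ico 0 T) t

/-- The Euler kernel `G₁(r) = (1/(2π)) log(1/r)`, profile of the Green function of the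
Laplacian on the plane. -/
def eulerKernel (r : ℝ) : ℝ := (1 / (2 * Real.pi)) * Real.log (1 / r)

/-- The quasi-geostrophic kernels: `G₁(r) = (1/(2π)) log(1/r)` and, for `s ∈ (0,1)`,
`G_s(r) = (Γ(1−s)/(2^{2s} π Γ(s))) r^{−2(1−s)}`. -/
def sqgKernel (s : ℝ) (r : ℝ) : ℝ :=
  if s = 1 then eulerKernel r
  else (Real.Gamma (1 - s) / ((2 : ℝ) ^ (2 * s) * Real.pi * Real.Gamma s)) *
    r ^ (-(2 * (1 - s)))

/-- A solution of the modified (difference) system associated to the index `i`: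
the curves `y_{ij}`, `j ≠ i`, satisfy
`y_{ij}' = (a_i + a_j) ∇^⊥K(|y_{ij}|) + Σ_{k≠i,j} a_k (∇^⊥K(|y_{ik}|) + ∇^⊥K(|y_{ij} − y_{ik}|))`
at every time of the set `I`. -/
def IsModifiedSolutionOn (N : ℕ) (a : Fin N → ℝ) (K : ℝ → ℝ) (i : Fin N)
    (I : Set ℝ) (y : {j : Fin N // j ≠ i} → ℝ → Plane) : Prop :=
  ∀ j : {j : Fin N // j ≠ i}, ∀ t ∈ I,
    HasDerivWithinAt (y j)
      ((a i + a j.val) • gradPerp K (y j t) +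
        ∑ k ∈ Finset.univ.erase j,
          a k.val • (gradPerp K (y k t) + gradPerp K (y j t - y k t)))
      I t

/-- No collapse for the modified system on the time set `I`: all the `y_{ij}` stay away
from `0` and from each other (so that all mutual distances `|x_i − x_j|` stay positive). -/
def ModifiedNoCollapseOn (N : ℕ) (i : Fin N) (I : Set ℝ)
    (y : {j : Fin N // j ≠ i} → ℝ → Plane) : Prop :=
  (∀ j : {j : Fin N // j ≠ i}, ∀ t ∈ I, y j t ≠ 0) ∧
  (∀ j k : {j : Fin N // j ≠ i}, j ≠ k → ∀ t ∈ I, y j t ≠ y k t)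

/-- The modified system collapses (with the vortex `i`) at time `T`:
`liminf_{t→T⁻} min_{j≠i} |y_{ij}(t)| = 0`. -/
def ModifiedCollapsesAt (N : ℕ) (i : Fin N)
    (y : {j : Fin N // j ≠ i} → ℝ → Plane) (T : ℝ) : Prop :=
  ∀ ε > (0 : ℝ), ∀ t₀, 0 ≤ t₀ → t₀ < T →
    ∃ t, t₀ < t ∧ t < T ∧ ∃ j : {j : Fin N // j ≠ i}, ‖y j t‖ < ε

/-- An `ε`-regularization of the kernel profile `K`: a `C¹` function `Kε` on `[0,∞)`
(extended to `ℝ`) that coincides with `K` on `[ε,∞)`, with `|Kε| ≤ |K|` on `(0,∞)`,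
`|Kε'| ≤ |K'(ε)|` on `[0,ε]`, and `|Kε| ≤ 2|K(ε)|` on `[0,∞)`. -/
def IsRegularization (K : ℝ → ℝ) (Kε : ℝ → ℝ) (ε : ℝ) : Prop :=
  ContDiff ℝ 1 Kε ∧
  (∀ q : ℝ, ε ≤ q → Kε q = K q) ∧
  (∀ q : ℝ, 0 < q → |Kε q| ≤ |K q|) ∧
  (∀ q : ℝ, 0 ≤ q → q ≤ ε → |deriv Kε q| ≤ |deriv K ε|) ∧
  (∀ q : ℝ, 0 ≤ q → |Kε q| ≤ 2 * |K ε|)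

open Topology
open scoped RealInnerProductSpace

/-!
The self-interaction velocity `(a_i + a_j) ∇^⊥G(|y_{ij}|)` is orthogonal to `y_{ij}`, so it does
not move `|y_{ij}|`: where `y_{ij} ≠ 0` the radial speed `⟨y_{ij}, y_{ij}'⟩ / |y_{ij}|` only sees
the interaction terms, each bounded by `|a_k| |G'|`, and where `y_{ij} = 0` the self-interaction
vanishes altogether. Since `|y|` need not be differentiable where `y = 0`, the chain rule is
replaced by bounds on difference quotients, which compose with the `C¹` profile `L_{a,ε}` and add
up over `j`.
-/

/-- `limsup_{τ → t, τ ∈ s} ‖f τ - f t‖ / |τ - t| ≤ B`, stated without `limsup` to avoid its junk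
values on unbounded sets. -/
def HasSlopeBoundWithinAt {E : Type*} [SeminormedAddCommGroup E] (f : ℝ → E) (B : ℝ)
    (s : Set ℝ) (t : ℝ) : Prop :=
  ∀ B' > B, ∀ᶠ τ in 𝓝[s \ {t}] t, ‖f τ - f t‖ ≤ B' * |τ - t|

namespace HasSlopeBoundWithinAt

variable {E : Type*} [NormedAddCommGroup E] {f g : ℝ → E} {B C : ℝ} {s : Set ℝ} {t : ℝ}

theorem mono (hf : HasSlopeBoundWithinAt f B s t) (hBC : B ≤ C) :
    HasSlopeBoundWithinAt f C s t :=
  fun B' hB' => hf B' (hBC.trans_lt hB')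

theorem norm (hf : HasSlopeBoundWithinAt f B s t) :
    HasSlopeBoundWithinAt (fun τ => ‖f τ‖) B s t := fun B' hB' =>
  (hf B' hB').mono fun _ h => (abs_norm_sub_norm_le _ _).trans h

theorem add (hf : HasSlopeBoundWithinAt f B s t) (hg : HasSlopeBoundWithinAt g C s t) :
    HasSlopeBoundWithinAt (f + g) (B + C) s t := by
  intro M hM
  filter_upwards [hf (B + (M - B - C) / 2) (by linarith),
    hg (C + (M - B - C) / 2) (by linarith)] with τ hfτ hgτ
  calc ‖(f + g) τ - (f + g) t‖ = ‖(f τ - f t) + (g τ - g t)‖ := by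
        simp only [Pi.add_apply, add_sub_add_comm]
    _ ≤ ‖f τ - f t‖ + ‖g τ - g t‖ := norm_add_le _ _
    _ ≤ M * |τ - t| := by linarith

theorem const (c : E) : HasSlopeBoundWithinAt (fun _ => c) 0 s t := fun B' hB' =>
  Eventually.of_forall fun τ => by simpa using mul_nonneg hB'.le (abs_nonneg (τ - t))

theorem sum {ι : Type*} {u : Finset ι} {F : ι → ℝ → E} {C : ι → ℝ}
    (hF : ∀ j ∈ u, HasSlopeBoundWithinAt (F j) (C j) s t) :
    HasSlopeBoundWithinAt (fun τ => ∑ j ∈ u, F j τ) (∑ j ∈ u, C j) s t := by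
  classical
  induction u using Finset.induction_on with
  | empty => simpa using const (E := E) (s := s) (t := t) 0
  | insert j u hj ih =>
    simp only [Finset.sum_insert hj]
    exact (hF j (u.mem_insert_self j)).add (ih fun k hk => hF k (Finset.mem_insert_of_mem hk))

theorem tendsto (hf : HasSlopeBoundWithinAt f B s t) :
    Tendsto f (𝓝[s \ {t}] t) (𝓝 (f t)) := by
  refine tendsto_sub_nhds_zero_iff.1 <| squeeze_zero_norm' (hf (B + 1) (lt_add_one B)) ?_
  have : Continuous fun τ : ℝ => (B + 1) * |τ - t| := by fun_prop
  exact (this.tendsto' t 0 (by simp)).mono_left nhdsWithin_le_nhds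

variable [NormedSpace ℝ E]

theorem _root_.HasDerivWithinAt.hasSlopeBoundWithinAt {f' : E}
    (hf : HasDerivWithinAt f f' s t) : HasSlopeBoundWithinAt f ‖f'‖ s t := by
  intro B' hB'
  have hslope := ((continuous_norm.tendsto _).comp
    (hasDerivWithinAt_iff_tendsto_slope.mp hf)).eventually_lt_const hB'
  filter_upwards [hslope, self_mem_nhdsWithin] with τ hτ hτs
  have hne : τ - t ≠ 0 := sub_ne_zero.mpr hτs.2
  calc ‖f τ - f t‖ = ‖slope f t τ‖ * |τ - t| := by
        rw [slope_def_module, norm_smul, Real.norm_eq_abs, abs_inv, mul_comm, ← mul_assoc,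
          mul_inv_cancel₀ (abs_ne_zero.mpr hne), one_mul]
    _ ≤ B' * |τ - t| := by gcongr; exact hτ.le

theorem norm_deriv_le {f' : E} (hf : HasSlopeBoundWithinAt f B s t)
    (hf' : HasDerivWithinAt f f' s t) [(𝓝[s \ {t}] t).NeBot] : ‖f'‖ ≤ B := by
  refine le_of_forall_gt_imp_ge_of_dense fun B' hB' => ?_
  refine le_of_tendsto ((continuous_norm.tendsto _).comp
    (hasDerivWithinAt_iff_tendsto_slope.mp hf')) ?_
  filter_upwards [hf B' hB', self_mem_nhdsWithin] with τ hτ hτs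
  have hpos : 0 < |τ - t| := abs_pos.mpr (sub_ne_zero.mpr hτs.2)
  rw [Function.comp_apply, slope_def_module, norm_smul, Real.norm_eq_abs, abs_inv,
    inv_mul_le_iff₀ hpos, mul_comm]
  exact hτ

theorem comp_hasStrictDerivAt {f L : ℝ → ℝ} {L' : ℝ} (hL : HasStrictDerivAt L L' (f t))
    (hf : HasSlopeBoundWithinAt f B s t) :
    HasSlopeBoundWithinAt (fun τ => L (f τ)) (|L'| * B) s t := by
  intro M hM
  obtain ⟨⟨K, B'⟩, hKB', hK, hB'⟩ : ∃ p : ℝ × ℝ, p.1 * p.2 < M ∧ |L'| < p.1 ∧ B < p.2 := by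
    have hmul : ∀ᶠ p : ℝ × ℝ in 𝓝[>] |L'| ×ˢ 𝓝[>] B, p.1 * p.2 < M :=
      ((continuous_mul.tendsto (|L'|, B)).eventually (gt_mem_nhds hM)).filter_mono <| by
        rw [nhds_prod_eq]; exact Filter.prod_mono nhdsWithin_le_nhds nhdsWithin_le_nhds
    exact (hmul.and (prod_mem_prod self_mem_nhdsWithin self_mem_nhdsWithin)).exists
  obtain ⟨U, hU, hLip⟩ := hL.hasStrictFDerivAt.exists_lipschitzOnWith_of_nnnorm_lt K.toNNReal (by
    rw [Real.lt_toNNReal_iff_coe_lt]; simpa using hK)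
  filter_upwards [hf B' hB', hf.tendsto hU] with τ hτ hτU
  have hK0 : 0 ≤ K := (abs_nonneg L').trans hK.le
  calc ‖L (f τ) - L (f t)‖ ≤ K * ‖f τ - f t‖ := by
        simpa [Real.coe_toNNReal K hK0] using
          lipschitzOnWith_iff_norm_sub_le.1 hLip hτU (mem_of_mem_nhds hU)
    _ ≤ K * (B' * |τ - t|) := by gcongr
    _ ≤ M * |τ - t| := by rw [← mul_assoc]; gcongr

end HasSlopeBoundWithinAt

section InnerProductSpace

variable {F : Type*} [NormedAddCommGroup F] [InnerProductSpace ℝ F] {y : ℝ → F} {W : F}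
  {s : Set ℝ} {t : ℝ}

theorem HasDerivWithinAt.norm (hy : HasDerivWithinAt y W s t) (h0 : y t ≠ 0) :
    HasDerivWithinAt (fun τ => ‖y τ‖) (⟪y t, W⟫ / ‖y t‖) s t := by
  have h := hy.norm_sq.sqrt (pow_ne_zero 2 (norm_ne_zero_iff.2 h0))
  simp only [Real.sqrt_sq (norm_nonneg _)] at h
  convert h using 1
  field_simp

theorem hasSlopeBoundWithinAt_norm {C : ℝ} (hy : HasDerivWithinAt y W s t)
    (h0 : y t = 0 → ‖W‖ ≤ C) (hr : |⟪y t, W⟫| ≤ ‖y t‖ * C) :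
    HasSlopeBoundWithinAt (fun τ => ‖y τ‖) C s t := by
  by_cases h : y t = 0
  · exact hy.hasSlopeBoundWithinAt.norm.mono (h0 h)
  · refine (hy.norm h).hasSlopeBoundWithinAt.mono ?_
    rwa [Real.norm_eq_abs, abs_div, abs_norm, div_le_iff₀ (norm_pos_iff.2 h), mul_comm]

end InnerProductSpace

section Plane

theorem inner_perp_self (v : Plane) : ⟪v, perp v⟫ = 0 := by
  simp [perp, PiLp.inner_apply, Fin.sum_univ_two]
  ring

theorem norm_perp (v : Plane) : ‖perp v‖ = ‖v‖ := by
  simp [perp, EuclideanSpace.norm_eq, Fin.sum_univ_two]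
  ring_nf

theorem gradPerp_zero (K : ℝ → ℝ) : gradPerp K 0 = 0 := by
  simp [gradPerp]

theorem inner_gradPerp_self (K : ℝ → ℝ) (z : Plane) : ⟪z, gradPerp K z⟫ = 0 := by
  rw [gradPerp, real_inner_smul_right, inner_perp_self, mul_zero]

theorem norm_gradPerp_le (K : ℝ → ℝ) (z : Plane) : ‖gradPerp K z‖ ≤ |deriv K ‖z‖| := by
  rcases eq_or_ne z 0 with rfl | hz
  · simp [gradPerp_zero]
  · rw [gradPerp, norm_smul, norm_perp, Real.norm_eq_abs, abs_div, abs_norm,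
      div_mul_cancel₀ _ (norm_ne_zero_iff.mpr hz)]

variable {ι : Type*} [Fintype ι] [DecidableEq ι] (w : ι → ℝ) (K : ℝ → ℝ) (Y : ι → Plane) (j : ι)

def interactionVelocity : Plane :=
  ∑ k ∈ Finset.univ.erase j, w k • (gradPerp K (Y k) + gradPerp K (Y j - Y k))

def interactionBound : ℝ :=
  ∑ k ∈ Finset.univ.erase j, |w k| * (|deriv K ‖Y k‖| + |deriv K ‖Y j - Y k‖|)

theorem norm_interactionVelocity_le :
    ‖interactionVelocity w K Y j‖ ≤ interactionBound w K Y j := by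
  refine (norm_sum_le _ _).trans (Finset.sum_le_sum fun k _ => ?_)
  rw [norm_smul, Real.norm_eq_abs]
  gcongr
  exact (norm_add_le _ _).trans (add_le_add (norm_gradPerp_le _ _) (norm_gradPerp_le _ _))

theorem abs_inner_self_add_interactionVelocity_le (c : ℝ) :
    |⟪Y j, c • gradPerp K (Y j) + interactionVelocity w K Y j⟫| ≤
      ‖Y j‖ * interactionBound w K Y j := by
  rw [inner_add_right, real_inner_smul_right, inner_gradPerp_self, mul_zero, zero_add]
  exact (abs_real_inner_le_norm _ _).trans (by gcongr; exact norm_interactionVelocity_le w K Y j)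

theorem norm_self_add_interactionVelocity_le_of_eq_zero (c : ℝ) (hj : Y j = 0) :
    ‖c • gradPerp K (Y j) + interactionVelocity w K Y j‖ ≤ interactionBound w K Y j := by
  rw [hj, gradPerp_zero, smul_zero, zero_add]
  exact norm_interactionVelocity_le w K Y j

end Plane

theorem IsModifiedSolutionOn.hasSlopeBoundWithinAt_comp_norm {N : ℕ} {a : Fin N → ℝ}
    {K : ℝ → ℝ} {i : Fin N} {s : Set ℝ} {y : {j : Fin N // j ≠ i} → ℝ → Plane}
    (hy : IsModifiedSolutionOn N a K i s y) {L : ℝ → ℝ} (hL : ContDiff ℝ 1 L)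
    (j : {j : Fin N // j ≠ i}) {t : ℝ} (ht : t ∈ s) :
    HasSlopeBoundWithinAt (fun τ => L ‖y j τ‖)
      (|deriv L ‖y j t‖| * interactionBound (fun k => a k.val) K (fun k => y k t) j) s t := by
  set Y : {j : Fin N // j ≠ i} → Plane := fun k => y k t
  have hW : HasDerivWithinAt (y j) ((a i + a j.val) • gradPerp K (Y j) +
      interactionVelocity (fun k => a k.val) K Y j) s t := hy j t ht
  exact (hasSlopeBoundWithinAt_norm hW
    (norm_self_add_interactionVelocity_le_of_eq_zero _ K Y j _)
    (abs_inner_self_add_interactionVelocity_le _ K Y j _)).comp_hasStrictDerivAt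
      (hL.hasStrictDerivAt one_ne_zero)

theorem nhdsWithin_Ico_diff_singleton_neBot {a b t : ℝ} (ht : t ∈ Set.Ico a b) :
    (𝓝[Set.Ico a b \ {t}] t).NeBot := by
  refine (nhdsGT_neBot t).mono ?_
  rw [← nhdsWithin_Ioo_eq_nhdsGT ht.2]
  exact nhdsWithin_mono t fun τ hτ => ⟨⟨ht.1.trans hτ.1.le, hτ.2⟩, hτ.1.ne'⟩

theorem derivative_estimate_along_regularized_dynamics_general
    (α : ℝ)
    (N : ℕ) (a : Fin N → ℝ) (i : Fin N)
    (ε : ℝ)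
    (Gε : ℝ → ℝ)
    (Lε : ℝ → ℝ) (hLε : IsRegularization (fun q : ℝ => q ^ (-(2 + α))) Lε ε)
    (T : ℝ) (y : {j : Fin N // j ≠ i} → ℝ → Plane)
    (hy : IsModifiedSolutionOn N a Gε i (Set.Ico 0 T) y) :
    ∀ t ∈ Set.Ico (0 : ℝ) T, ∀ v : ℝ,
      HasDerivWithinAt (fun τ => ∑ j : {j : Fin N // j ≠ i}, Lε ‖y j τ‖)
        v (Set.Ico 0 T) t →
      |v| ≤ ∑ j : {j : Fin N // j ≠ i}, ∑ k ∈ Finset.univ.erase j,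
        |a k.val| * |deriv Lε ‖y j t‖| *
          (|deriv Gε ‖y k t‖| + |deriv Gε ‖y j t - y k t‖|) := by
  intro t ht v hv
  have := nhdsWithin_Ico_diff_singleton_neBot ht
  have hbound := (HasSlopeBoundWithinAt.sum fun j _ =>
    hy.hasSlopeBoundWithinAt_comp_norm hLε.1 j ht).norm_deriv_le hv
  rw [Real.norm_eq_abs] at hbound
  refine hbound.trans_eq (Finset.sum_congr rfl fun j _ => ?_)
  rw [interactionBound, Finset.mul_sum]
  exact Finset.sum_congr rfl fun k _ => by ring

/-- Derivative estimate along the regularized modified dynamics: with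
`Φ(Y) = Σ_{j≠i} L_{a,ε}(|y_{ij}|)` and
`Ψ(Y) = Σ_{j≠i} Σ_{k≠i,j} |a_k| |L_{a,ε}'(|y_{ij}|)| (|G_{s,ε}'(|y_{ik}|)| + |G_{s,ε}'(|y_{ij} − y_{ik}|)|)`,
any derivative of `t ↦ Φ(Y(t))` along a solution of the modified system with kernel
`G_{s,ε}` is bounded in absolute value by `Ψ(Y(t))` (the self-interaction terms give no
contribution). -/
theorem derivative_estimate_along_regularized_dynamics
    (s α : ℝ) (hs : 0 < s) (hs1 : s ≤ 1) (hα : 0 < α)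
    (N : ℕ) (hN : 1 ≤ N) (a : Fin N → ℝ) (ha : ∀ i, a i ≠ 0) (i : Fin N)
    (ε : ℝ) (hε : 0 < ε) (hε1 : ε ≤ 1)
    (Gε : ℝ → ℝ) (hGε : IsRegularization (sqgKernel s) Gε ε)
    (Lε : ℝ → ℝ) (hLε : IsRegularization (fun q : ℝ => q ^ (-(2 + α))) Lε ε)
    (T : ℝ) (y : {j : Fin N // j ≠ i} → ℝ → Plane)
    (hy : IsModifiedSolutionOn N a Gε i (Set.Ico 0 T) y) :
    ∀ t ∈ Set.Ico (0 : ℝ) T, ∀ v : ℝ,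
      HasDerivWithinAt (fun τ => ∑ j : {j : Fin N // j ≠ i}, Lε ‖y j τ‖)
        v (Set.Ico 0 T) t →
      |v| ≤ ∑ j : {j : Fin N // j ≠ i}, ∑ k ∈ Finset.univ.erase j,
        |a k.val| * |deriv Lε ‖y j t‖| *
          (|deriv Gε ‖y k t‖| + |deriv Gε ‖y j t - y k t‖|) :=
  derivative_estimate_along_regularized_dynamics_general α N a i ε Gε Lε hLε T y hy
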